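/- arXiv:2310.00269 — 2 statements merged into one kernel-verified Lean document; each statement's English description precedes it below -/
import Mathlib

section
/- Let φ ∈ C(𝕋ⁿ) be a kernel with φ ≥ c₁ > 0, and suppose V(t,α) solves the agent-based dynamics V̇(t,α) = w(t,α) ∫ φ(X(t,α) - X(t,β)) (V(t,β) - V(t,α)) ρ₀(β) dβ with w(t,α) ≥ w₋ > 0 and ∫ρ₀ = M. Then the velocity diameter A(t) := max_{α,β} |V(t,α) - V(t,β)| satisfies A(t) ≤ A(0) e^{-w₋ M c₁ t}. -/
/-! At a pair `(α, β)` realising the velocity diameter, every velocity `V γ` satisfies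
`⟪V γ - V α, V α - V β⟫ ≤ 0 ≤ ⟪V γ - V β, V α - V β⟫`, so the kernel and the weight may be
replaced by their lower bounds `c₁` and `wlo`, and the alignment force decreases
`‖V α - V β‖²` at rate at least `2 wlo M c₁`. Since this differential inequality only holds at
maximising pairs, it is integrated by a first-touching-time argument against the barriers
`(C + ε) e^{-(μ - ε) t}`, and then `ε → 0`. -/

open MeasureTheory

instance : Fact (0 < 2 * Real.pi) := ⟨by positivity⟩

open Filter Topology Function
open scoped RealInnerProductSpace

theorem HasDerivAt.nonneg_of_eventually_le_left {h : ℝ → ℝ} {h' t : ℝ} (hd : HasDerivAt h h' t)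
    (hle : ∀ᶠ s in 𝓝[<] t, h s ≤ h t) : 0 ≤ h' := by
  refine ge_of_tendsto (hasDerivAt_iff_tendsto_slope_left_right.1 hd).1 ?_
  filter_upwards [hle, self_mem_nhdsWithin] with s hs hst
  rw [slope_def_field]
  exact div_nonneg_of_nonpos (sub_nonpos.2 hs) (sub_nonpos.2 (le_of_lt hst))

section Barrier

variable {K : Type*} [TopologicalSpace K] [CompactSpace K] {f f' : ℝ → K → ℝ}

theorem lt_of_hasDerivAt_lt_of_touch {B B' : ℝ → ℝ} (hf : Continuous (uncurry f))
    (hB : Continuous B) (hf' : ∀ t p, HasDerivAt (f · p) (f' t p) t)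
    (hB' : ∀ t, HasDerivAt B (B' t) t) (h0 : ∀ p, f 0 p < B 0)
    (htouch : ∀ t > 0, ∀ p, f t p = B t → (∀ q, f t q ≤ B t) → f' t p < B' t) :
    ∀ t, 0 ≤ t → ∀ p, f t p < B t := by
  by_contra! ⟨T, hT, p, hp⟩
  set S : Set ℝ := Set.Ici 0 ∩ Prod.fst '' {x : ℝ × K | B x.1 ≤ f x.1 x.2}
  have hS : IsClosed S :=
    isClosed_Ici.inter (isClosedMap_fst_of_compactSpace _ (isClosed_le (hB.comp continuous_fst) hf))
  obtain ⟨hmem, hleast⟩ := hS.isLeast_csInf ⟨T, hT, ⟨T, p⟩, hp, rfl⟩ ⟨0, fun _ ht => ht.1⟩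
  generalize sInf S = t₀ at hmem hleast
  obtain ⟨ht₀, ⟨t₀, p₀⟩, hp₀, rfl⟩ := hmem
  have hbefore : ∀ s, 0 ≤ s → s < t₀ → ∀ q, f s q < B s := fun s hs hst q => by
    by_contra! h
    exact (hleast ⟨hs, ⟨s, q⟩, h, rfl⟩).not_gt hst
  have ht₀pos : 0 < t₀ := by
    refine lt_of_le_of_ne ht₀ fun h => ?_
    subst h
    exact (h0 p₀).not_ge hp₀
  have hleft : ∀ q, ∀ᶠ s in 𝓝[<] t₀, f s q < B s := fun q => by
    filter_upwards [Ioo_mem_nhdsLT ht₀pos] with s hs using hbefore s hs.1.le hs.2 q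
  have hle : ∀ q, f t₀ q ≤ B t₀ := fun q =>
    le_of_tendsto_of_tendsto (((hf.uncurry_right q).tendsto t₀).mono_left nhdsWithin_le_nhds)
      ((hB.tendsto t₀).mono_left nhdsWithin_le_nhds) ((hleft q).mono fun _ hs => hs.le)
  have heq : f t₀ p₀ = B t₀ := le_antisymm (hle p₀) hp₀
  have hderiv : 0 ≤ f' t₀ p₀ - B' t₀ :=
    ((hf' t₀ p₀).sub (hB' t₀)).nonneg_of_eventually_le_left <|
      (hleft p₀).mono fun s hs => by simp only [Pi.sub_apply]; linarith
  linarith [htouch t₀ ht₀pos p₀ heq hle]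

theorem le_mul_exp_of_hasDerivAt_le_of_isMax {C μ : ℝ} (hf : Continuous (uncurry f))
    (hf' : ∀ t p, HasDerivAt (f · p) (f' t p) t) (hC : 0 ≤ C) (h0 : ∀ p, f 0 p ≤ C)
    (hmax : ∀ t > 0, ∀ p, (∀ q, f t q ≤ f t p) → f' t p ≤ -μ * f t p) :
    ∀ t, 0 ≤ t → ∀ p, f t p ≤ C * Real.exp (-(μ * t)) := by
  intro t ht p
  set B : ℝ → ℝ → ℝ := fun ε s => (C + ε) * Real.exp (-((μ - ε) * s))
  have hbarrier : ∀ ε > 0, f t p < B ε t := by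
    intro ε hε
    have hBpos : ∀ s, 0 < B ε s := fun s => by positivity
    refine lt_of_hasDerivAt_lt_of_touch hf (by fun_prop) hf' (B' := fun s => -(μ - ε) * B ε s)
      (fun s => ?_) (fun q => ?_) (fun s hs q hq hqmax => ?_) t ht p
    · exact (((hasDerivAt_id s).const_mul (μ - ε)).fun_neg.exp.const_mul (C + ε)).congr_deriv
        (by simp only [B, id]; ring)
    · simpa [B] using (h0 q).trans_lt (lt_add_of_pos_right C hε)
    · have := hmax s hs q fun r => hq ▸ hqmax r
      rw [hq] at this
      nlinarith [hBpos s]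
  have hlim : Tendsto (B · t) (𝓝[>] 0) (𝓝 (C * Real.exp (-(μ * t)))) :=
    ((by fun_prop : Continuous (B · t)).tendsto' 0 _ (by simp [B])).mono_left nhdsWithin_le_nhds
  exact ge_of_tendsto hlim (eventually_mem_nhdsWithin.mono fun ε hε => (hbarrier ε hε).le)

end Barrier

theorem real_inner_sub_sub_nonpos_of_norm_le {E : Type*} [NormedAddCommGroup E]
    [InnerProductSpace ℝ E] {x y z : E} (h : ‖z - y‖ ≤ ‖x - y‖) : ⟪z - x, x - y⟫ ≤ 0 := by
  have hsplit : ⟪z - x, x - y⟫ = ⟪z - y, x - y⟫ - ‖x - y‖ ^ 2 := by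
    rw [show z - x = (z - y) - (x - y) by abel, inner_sub_left, real_inner_self_eq_norm_sq]
  have hcs : ⟪z - y, x - y⟫ ≤ ‖x - y‖ * ‖x - y‖ :=
    (real_inner_le_norm _ _).trans (mul_le_mul_of_nonneg_right h (norm_nonneg _))
  rw [hsplit]
  nlinarith

theorem mul_integral_mul_le_of_nonpos {Ω : Type*} [MeasurableSpace Ω] {μ : Measure Ω}
    {k ρ s : Ω → ℝ} {c w w₀ : ℝ} (hks : Integrable (fun γ => k γ * s γ) μ)
    (hρs : Integrable (fun γ => ρ γ * s γ) μ) (hk : ∀ γ, c * ρ γ ≤ k γ) (hρ : ∀ γ, 0 ≤ ρ γ)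
    (hs : ∀ γ, s γ ≤ 0) (hc : 0 ≤ c) (hw : w₀ ≤ w) (hw₀ : 0 ≤ w₀) :
    w * ∫ γ, k γ * s γ ∂μ ≤ w₀ * c * ∫ γ, ρ γ * s γ ∂μ := by
  have hkρ : ∫ γ, k γ * s γ ∂μ ≤ c * ∫ γ, ρ γ * s γ ∂μ := by
    rw [← integral_const_mul]
    refine integral_mono hks (hρs.const_mul c) fun γ => ?_
    simpa only [mul_assoc] using mul_le_mul_of_nonpos_right (hk γ) (hs γ)
  have hρ_nonpos : c * ∫ γ, ρ γ * s γ ∂μ ≤ 0 :=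
    mul_nonpos_of_nonneg_of_nonpos hc
      (integral_nonpos fun γ => mul_nonpos_of_nonneg_of_nonpos (hρ γ) (hs γ))
  calc w * ∫ γ, k γ * s γ ∂μ ≤ w₀ * ∫ γ, k γ * s γ ∂μ :=
        mul_le_mul_of_nonpos_right hw (hkρ.trans hρ_nonpos)
    _ ≤ w₀ * (c * ∫ γ, ρ γ * s γ ∂μ) := mul_le_mul_of_nonneg_left hkρ hw₀
    _ = w₀ * c * ∫ γ, ρ γ * s γ ∂μ := by ring

section Alignment

variable {Ω E : Type*} [TopologicalSpace Ω] [CompactSpace Ω] [MeasurableSpace Ω]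
  [OpensMeasurableSpace Ω] {μ : Measure Ω} [IsFiniteMeasure μ]
  [NormedAddCommGroup E] [InnerProductSpace ℝ E] [CompleteSpace E]

theorem real_inner_alignment_le_of_forall_norm_sub_le {v : Ω → E} {ka kb ρ : Ω → ℝ} {a b : Ω}
    {c wa wb w₀ : ℝ} (hv : Continuous v) (hka : Continuous ka) (hkb : Continuous kb)
    (hρc : Continuous ρ) (hkaρ : ∀ γ, c * ρ γ ≤ ka γ) (hkbρ : ∀ γ, c * ρ γ ≤ kb γ)
    (hρ : ∀ γ, 0 ≤ ρ γ) (hc : 0 ≤ c) (hwa : w₀ ≤ wa) (hwb : w₀ ≤ wb) (hw₀ : 0 ≤ w₀)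
    (hmax : ∀ γ γ', ‖v γ - v γ'‖ ≤ ‖v a - v b‖) :
    ⟪v a - v b, wa • ∫ γ, ka γ • (v γ - v a) ∂μ - wb • ∫ γ, kb γ • (v γ - v b) ∂μ⟫ ≤
      -(w₀ * (∫ γ, ρ γ ∂μ) * c) * ‖v a - v b‖ ^ 2 := by
  have hint : ∀ g : Ω → ℝ, Continuous g → Integrable g μ :=
    fun g hg => hg.integrable_of_hasCompactSupport (.of_compactSpace g)
  set u := v a - v b
  set sa : Ω → ℝ := fun γ => ⟪v γ - v a, u⟫
  set sb : Ω → ℝ := fun γ => ⟪v γ - v b, u⟫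
  have hsa : Continuous sa := (hv.sub continuous_const).inner continuous_const
  have hsb : Continuous sb := (hv.sub continuous_const).inner continuous_const
  have hsa_nonpos : ∀ γ, sa γ ≤ 0 := fun γ => real_inner_sub_sub_nonpos_of_norm_le (hmax γ b)
  have hsb_nonneg : ∀ γ, 0 ≤ sb γ := fun γ => by
    have := real_inner_sub_sub_nonpos_of_norm_le (z := v γ)
      ((hmax γ a).trans_eq (norm_sub_rev _ _))
    rwa [← neg_sub (v a), inner_neg_right, neg_nonpos] at this
  have hsab : ∀ γ, sa γ - sb γ = -‖u‖ ^ 2 := fun γ => by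
    rw [← inner_sub_left, sub_sub_sub_cancel_left, ← neg_sub, inner_neg_left,
      real_inner_self_eq_norm_sq]
  have hinner : ∀ (k : Ω → ℝ) (x : E), Continuous k →
      ⟪u, ∫ γ, k γ • (v γ - x) ∂μ⟫ = ∫ γ, k γ * ⟪v γ - x, u⟫ ∂μ := fun k x hk => by
    have hkv : Continuous fun γ => k γ • (v γ - x) := by fun_prop
    rw [← integral_inner (hkv.integrable_of_hasCompactSupport (.of_compactSpace _))]
    simp only [real_inner_smul_right, real_inner_comm u]
  have ha := mul_integral_mul_le_of_nonpos (μ := μ) (hint (fun γ => ka γ * sa γ) (by fun_prop))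
    (hint (fun γ => ρ γ * sa γ) (by fun_prop)) hkaρ hρ hsa_nonpos hc hwa hw₀
  have hb := mul_integral_mul_le_of_nonpos (μ := μ) (s := fun γ => -sb γ)
    (hint (fun γ => kb γ * -sb γ) (by fun_prop))
    (hint (fun γ => ρ γ * -sb γ) (by fun_prop)) hkbρ hρ (fun γ => neg_nonpos.2 (hsb_nonneg γ))
    hc hwb hw₀
  simp only [mul_neg, integral_neg] at hb
  have hdiff : ∫ γ, ρ γ * sa γ ∂μ - ∫ γ, ρ γ * sb γ ∂μ = -(∫ γ, ρ γ ∂μ) * ‖u‖ ^ 2 := by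
    rw [← integral_sub (hint (fun γ => ρ γ * sa γ) (by fun_prop))
      (hint (fun γ => ρ γ * sb γ) (by fun_prop))]
    simp only [← mul_sub, hsab, mul_neg, integral_neg, integral_mul_const, neg_mul]
  rw [inner_sub_right, real_inner_smul_right, real_inner_smul_right, hinner ka _ hka,
    hinner kb _ hkb]
  linear_combination ha + hb + w₀ * c * hdiff

end Alignment

/-- L∞ exponential alignment for the Lagrangian s-model: if `φ ≥ c₁ > 0`,
`w ≥ wlo > 0`, `∫ρ₀ = M`, and `V̇(t,α) = w(t,α)∫ φ(X(t,α)-X(t,β))(V(t,β)-V(t,α))ρ₀(β)dβ`,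
then the velocity diameter decays: `A(t) ≤ A(0) e^{-wlo M c₁ t}`. -/
theorem stmt_14 {n d : ℕ}
    (φ ρ₀ : (Fin n → AddCircle (2 * Real.pi)) → ℝ)
    (w : ℝ → (Fin n → AddCircle (2 * Real.pi)) → ℝ)
    (X : ℝ → (Fin n → AddCircle (2 * Real.pi)) → (Fin n → AddCircle (2 * Real.pi)))
    (V : ℝ → (Fin n → AddCircle (2 * Real.pi)) → EuclideanSpace ℝ (Fin d))
    (c₁ wlo M A0 : ℝ) (hc₁ : 0 < c₁) (hwlo : 0 < wlo)
    (hφc : Continuous φ) (hφ : ∀ z, c₁ ≤ φ z)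
    (hρc : Continuous ρ₀) (hρ0 : ∀ α, 0 ≤ ρ₀ α) (hM : ∫ α, ρ₀ α = M)
    (hw : ∀ t α, wlo ≤ w t α)
    (hVc : Continuous (fun p : ℝ × (Fin n → AddCircle (2 * Real.pi)) => V p.1 p.2))
    (hXc : Continuous (fun p : ℝ × (Fin n → AddCircle (2 * Real.pi)) => X p.1 p.2))
    (hode : ∀ t α, HasDerivAt (fun s => V s α)
        (w t α • ∫ β, (φ (X t α - X t β) * ρ₀ β) • (V t β - V t α)) t)
    (hA0 : ∀ α β, ‖V 0 α - V 0 β‖ ≤ A0) :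
    ∀ t, 0 ≤ t → ∀ α β,
      ‖V t α - V t β‖ ≤ A0 * Real.exp (-(wlo * M * c₁ * t)) := by
  intro t ht α β
  have hA0_nonneg : 0 ≤ A0 := (norm_nonneg _).trans (hA0 0 0)
  have hsq := le_mul_exp_of_hasDerivAt_le_of_isMax (K := _ × _) (μ := 2 * (wlo * M * c₁))
    (f := fun s p => ‖V s p.1 - V s p.2‖ ^ 2)
    (hf := by fun_prop) (hf' := fun s p => ((hode s p.1).sub (hode s p.2)).norm_sq)
    (sq_nonneg A0) (fun p => pow_le_pow_left₀ (norm_nonneg _) (hA0 p.1 p.2) 2) ?_ t ht (α, β)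
  · refine (pow_le_pow_iff_left₀ (norm_nonneg _) (by positivity) two_ne_zero).1 (hsq.trans_eq ?_)
    rw [mul_pow, ← Real.exp_nat_mul]
    ring_nf
  · intro s _ p hp
    have hVs : Continuous (V s) := hVc.comp (Continuous.prodMk_right s)
    have hXs : Continuous (X s) := hXc.comp (Continuous.prodMk_right s)
    have hk : ∀ a, Continuous fun γ => φ (X s a - X s γ) * ρ₀ γ := fun a => by fun_prop
    have hkρ : ∀ a γ, c₁ * ρ₀ γ ≤ φ (X s a - X s γ) * ρ₀ γ := fun a γ =>
      mul_le_mul_of_nonneg_right (hφ _) (hρ0 γ)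
    have halign := real_inner_alignment_le_of_forall_norm_sub_le (μ := volume) hVs (hk p.1)
      (hk p.2) hρc (hkρ p.1) (hkρ p.2) hρ0 hc₁.le (hw s p.1) (hw s p.2) hwlo.le fun γ γ' =>
        (pow_le_pow_iff_left₀ (norm_nonneg _) (norm_nonneg _) two_ne_zero).1 (hp (γ, γ'))
    rw [hM] at halign
    simp only [Pi.sub_apply]
    linarith
end

section
/- Let u, ρ be smooth functions on ℝ (or 𝕋) solving ∂ₜρ + ∂ₓ(uρ) = 0 and ∂ₜu + u∂ₓu = w((uρ)_φ - u ρ_φ), where w solves ∂ₜw + u_F ∂ₓ w = 0 with u_F = (uρ)_φ/ρ_φ and ρ_φ = ρ*φ. Then the quantity e := ∂ₓu + w ρ_φ satisfies the conservation law ∂ₜe + ∂ₓ(ue) = 0. -/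
open MeasureTheory Function Pointwise

section infra
variable {F : ℝ × ℝ → ℝ}

-- slice derivative in x
lemma slice_x (hF : ContDiff ℝ (⊤ : ℕ∞) F) (t x : ℝ) :
    HasDerivAt (fun z => F (t, z)) (fderiv ℝ F (t, x) (0, 1)) x := by
  have h1 : HasFDerivAt F (fderiv ℝ F (t, x)) (t, x) :=
    (hF.differentiable (by simp) (t, x)).hasFDerivAt
  have h2 : HasDerivAt (fun z : ℝ => ((t, z) : ℝ × ℝ)) ((0 : ℝ), (1 : ℝ)) x :=
    (hasDerivAt_const x t).prodMk (hasDerivAt_id x)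
  exact h1.comp_hasDerivAt x h2

lemma slice_t (hF : ContDiff ℝ (⊤ : ℕ∞) F) (t x : ℝ) :
    HasDerivAt (fun s => F (s, x)) (fderiv ℝ F (t, x) (1, 0)) t := by
  have h1 : HasFDerivAt F (fderiv ℝ F (t, x)) (t, x) :=
    (hF.differentiable (by simp) (t, x)).hasFDerivAt
  have h2 : HasDerivAt (fun s : ℝ => ((s, x) : ℝ × ℝ)) ((1 : ℝ), (0 : ℝ)) t :=
    (hasDerivAt_id t).prodMk (hasDerivAt_const t x)
  exact h1.comp_hasDerivAt t h2

lemma fderiv_apply_smooth (hF : ContDiff ℝ (⊤ : ℕ∞) F) (v : ℝ × ℝ) :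
    ContDiff ℝ (⊤ : ℕ∞) (fun p => fderiv ℝ F p v) := by
  have h1 : ContDiff ℝ (⊤ : ℕ∞) (fderiv ℝ F) := hF.fderiv_right (by simp)
  exact (ContinuousLinearMap.apply ℝ ℝ v).contDiff.comp h1

/-- Clairaut in the form we need. -/
lemma mixed_deriv (hF : ContDiff ℝ (⊤ : ℕ∞) F) (t x : ℝ) :
    HasDerivAt (fun s => deriv (fun z => F (s, z)) x)
      (deriv (fun z => deriv (fun s => F (s, z)) t) x) t := by
  set f' : ℝ × ℝ → (ℝ × ℝ) →L[ℝ] ℝ := fderiv ℝ F with hf'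
  have hC : ContDiff ℝ (⊤ : ℕ∞) f' := hF.fderiv_right (by simp)
  have hf'd : HasFDerivAt f' (fderiv ℝ f' (t, x)) (t, x) :=
    (hC.differentiable (by simp) (t, x)).hasFDerivAt
  set f'' := fderiv ℝ f' (t, x) with hf''
  have hsymm : ∀ v w : ℝ × ℝ, f'' v w = f'' w v :=
    second_derivative_symmetric (fun y => (hF.differentiable (by simp) y).hasFDerivAt) hf'd
  -- LHS
  have hGx : ∀ v : ℝ × ℝ, HasDerivAt (fun s => f' (s, x) v)
      ((f'' (1, 0)) v) t := by
    intro v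
    have := ((ContinuousLinearMap.apply ℝ ℝ v).hasFDerivAt.comp (t, x) hf'd)
    have h2 : HasDerivAt (fun s : ℝ => ((s, x) : ℝ × ℝ)) ((1 : ℝ), (0 : ℝ)) t :=
      (hasDerivAt_id t).prodMk (hasDerivAt_const t x)
    simpa [Function.comp_def] using this.comp_hasDerivAt t h2
  have hGz : ∀ v : ℝ × ℝ, HasDerivAt (fun z => f' (t, z) v)
      ((f'' (0, 1)) v) x := by
    intro v
    have := ((ContinuousLinearMap.apply ℝ ℝ v).hasFDerivAt.comp (t, x) hf'd)
    have h2 : HasDerivAt (fun z : ℝ => ((t, z) : ℝ × ℝ)) ((0 : ℝ), (1 : ℝ)) x :=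
      (hasDerivAt_const x t).prodMk (hasDerivAt_id x)
    simpa [Function.comp_def] using this.comp_hasDerivAt x h2
  have e1 : (fun s => deriv (fun z => F (s, z)) x) = fun s => f' (s, x) (0, 1) := by
    funext s; exact (slice_x hF s x).deriv
  have e2 : (fun z => deriv (fun s => F (s, z)) t) = fun z => f' (t, z) (1, 0) := by
    funext z; exact (slice_t hF t z).deriv
  rw [e1, e2, (hGz (1, 0)).deriv, ← hsymm]
  exact hGx (0, 1)

end infra


lemma deriv_zero_outside {g : ℝ → ℝ} {K : Set ℝ} (hKc : IsClosed K)
    (h : support g ⊆ K) {y : ℝ} (hy : y ∉ K) : deriv g y = 0 := by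
  have hev : g =ᶠ[nhds y] (fun _ => (0 : ℝ)) := by
    filter_upwards [hKc.isOpen_compl.mem_nhds hy] with z hz
    exact Function.notMem_support.mp (fun hzs => hz (h hzs))
  rw [hev.deriv_eq, deriv_const]

lemma conv_hasDerivAt (φ g : ℝ → ℝ) (hφ : ContDiff ℝ (⊤ : ℕ∞) φ) (hg : ContDiff ℝ (⊤ : ℕ∞) g)
    {K : Set ℝ} (hK : IsCompact K) (hsupp : Function.support g ⊆ K) (x₀ : ℝ) :
    HasDerivAt (fun x => ∫ y, φ (x - y) * g y) (∫ y, φ (x₀ - y) * deriv g y) x₀ := by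
  have hKc : IsClosed K := hK.isClosed
  have hgc : Continuous g := hg.continuous
  have hg'c : Continuous (deriv g) := hg.continuous_deriv (by simp)
  have hφc : Continuous φ := hφ.continuous
  -- compact set K' containing the support in z of z ↦ g (x - z) for x near x₀
  set K' : Set ℝ := Metric.closedBall x₀ 1 + (-K) with hK'def
  have hK' : IsCompact K' := (isCompact_closedBall x₀ 1).add hK.neg
  have memK' : ∀ {x z : ℝ}, x ∈ Metric.closedBall x₀ 1 → x - z ∈ K → z ∈ K' := by
    intro x z hx hz
    have : z = x + -(x - z) := by ring
    rw [this]
    exact Set.add_mem_add hx (Set.neg_mem_neg.mpr hz)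
  -- substitution identities
  have subst : ∀ (h : ℝ → ℝ) (x : ℝ), ∫ z, h (x - z) = ∫ y, h y := fun h x =>
    integral_sub_left_eq_self h volume x
  have keyfun : ∀ x : ℝ, (∫ z, φ z * g (x - z)) = ∫ y, φ (x - y) * g y := by
    intro x
    have := subst (fun y => φ (x - y) * g y) x
    simpa using this
  have keyval : (∫ z, φ z * deriv g (x₀ - z)) = ∫ y, φ (x₀ - y) * deriv g y := by
    have := subst (fun y => φ (x₀ - y) * deriv g y) x₀
    simpa using this
  -- bounds
  obtain ⟨Cφ, hCφ⟩ := hK'.exists_bound_of_continuousOn hφc.continuousOn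
  obtain ⟨Cg, hCg⟩ := hK.exists_bound_of_continuousOn hg'c.continuousOn
  have hCφ0 : 0 ≤ Cφ ∨ K' = ∅ := by
    rcases Set.eq_empty_or_nonempty K' with h | ⟨z, hz⟩
    · exact Or.inr h
    · exact Or.inl ((norm_nonneg _).trans (hCφ z hz))
  set Mg : ℝ := max Cg 0 with hMg
  have hgB : ∀ y : ℝ, ‖deriv g y‖ ≤ Mg := by
    intro y
    by_cases hy : y ∈ K
    · exact (hCg y hy).trans (le_max_left _ _)
    · rw [deriv_zero_outside hKc hsupp hy]; simp [hMg]
  set Mφ : ℝ := max Cφ 0 with hMφ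
  have hφB : ∀ z ∈ K', ‖φ z‖ ≤ Mφ := fun z hz => (hCφ z hz).trans (le_max_left _ _)
  set bound : ℝ → ℝ := K'.indicator (fun _ => Mφ * Mg) with hbound
  have main := hasDerivAt_integral_of_dominated_loc_of_deriv_le
    (F := fun x z => φ z * g (x - z)) (F' := fun x z => φ z * deriv g (x - z))
    (μ := volume) (x₀ := x₀) (bound := bound) (s := Metric.ball x₀ 1) (Metric.ball_mem_nhds x₀ one_pos)
    (Filter.Eventually.of_forall fun x =>
      (hφc.mul (hgc.comp (continuous_const.sub continuous_id))).aestronglyMeasurable)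
    (by
      apply Continuous.integrable_of_hasCompactSupport
        (hφc.mul (hgc.comp (continuous_const.sub continuous_id)))
      apply HasCompactSupport.intro hK'
      intro z hz
      have : g (x₀ - z) = 0 := by
        by_contra h
        exact hz (memK' (Metric.mem_closedBall_self zero_le_one) (hsupp h))
      simp [this])
    ((hφc.mul (hg'c.comp (continuous_const.sub continuous_id))).aestronglyMeasurable)
    (Filter.Eventually.of_forall (fun z => by
      intro x hx
      have hx' : x ∈ Metric.closedBall x₀ 1 := Metric.ball_subset_closedBall hx
      by_cases hz : z ∈ K'
      · have : bound z = Mφ * Mg := Set.indicator_of_mem hz _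
        rw [this, norm_mul]
        exact mul_le_mul (hφB z hz) (hgB _) (norm_nonneg _) (le_max_right _ _)
      · have hb : bound z = 0 := Set.indicator_of_notMem hz _
        have : deriv g (x - z) = 0 := by
          apply deriv_zero_outside hKc hsupp
          intro hmem
          exact hz (memK' hx' hmem)
        simp [hb, this]))
    (by
      rw [hbound, integrable_indicator_iff hK'.measurableSet]
      exact integrableOn_const hK'.measure_lt_top.ne)
    (Filter.Eventually.of_forall (fun z => by
      intro x hx
      have hd : HasDerivAt g (deriv g (x - z)) (x - z) :=
        (hg.differentiable (by simp) (x - z)).hasDerivAt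
      have hsub : HasDerivAt (fun x : ℝ => x - z) 1 x := (hasDerivAt_id x).sub_const z
      have := (hd.comp x hsub).const_mul (φ z)
      simpa using this))
  have hres := main.2
  have : (fun x => ∫ z, φ z * g (x - z)) = fun x => ∫ y, φ (x - y) * g y :=
    funext keyfun
  rw [this, keyval] at hres
  exact hres

lemma param_t (ρ u : ℝ → ℝ → ℝ) (φ : ℝ → ℝ)
    (hρ : ContDiff ℝ (⊤ : ℕ∞) (fun p : ℝ × ℝ => ρ p.1 p.2))
    (hu : ContDiff ℝ (⊤ : ℕ∞) (fun p : ℝ × ℝ => u p.1 p.2))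
    (hφ : ContDiff ℝ (⊤ : ℕ∞) φ)
    {K : Set ℝ} (hK : IsCompact K) (hsupp : ∀ t, Function.support (ρ t) ⊆ K)
    (hρPDE : ∀ t x, HasDerivAt (fun s => ρ s x)
        (-(deriv (fun y => u t y * ρ t y) x)) t) (t x : ℝ) :
    HasDerivAt (fun s => ∫ y, φ (x - y) * ρ s y)
      (-∫ y, φ (x - y) * deriv (fun z => u t z * ρ t z) y) t := by
  have hKc : IsClosed K := hK.isClosed
  set G : ℝ × ℝ → ℝ := fun p => u p.1 p.2 * ρ p.1 p.2 with hGdef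
  have hG : ContDiff ℝ (⊤ : ℕ∞) G := hu.mul hρ
  set D : ℝ × ℝ → ℝ := fun p => fderiv ℝ G p (0, 1) with hDdef
  have hDc : Continuous D := (fderiv_apply_smooth hG _).continuous
  have hφc : Continuous φ := hφ.continuous
  have hρsc : ∀ s, Continuous (fun y => ρ s y) := fun s =>
    hρ.continuous.comp (Continuous.prodMk_right s)
  have hcont : ∀ s, Continuous (fun y => φ (x - y) * ρ s y) := fun s =>
    (hφc.comp (continuous_const.sub continuous_id)).mul (hρsc s)
  have hDeq : ∀ s y, deriv (fun z => u s z * ρ s z) y = D (s, y) := fun s y =>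
    (slice_x hG s y).deriv
  have hsuppG : ∀ s, support (fun z => u s z * ρ s z) ⊆ K := by
    intro s z hz
    exact hsupp s (fun h0 => hz (by simp [h0]))
  have hD0 : ∀ s, ∀ y ∉ K, D (s, y) = 0 := by
    intro s y hy
    rw [← hDeq]
    exact deriv_zero_outside hKc (hsuppG s) hy
  -- bound on compact set
  obtain ⟨C, hC⟩ := ((isCompact_closedBall t 1).prod hK).exists_bound_of_continuousOn
    (Continuous.continuousOn (((hφc.comp (continuous_const.sub continuous_snd)).mul hDc) :
      Continuous (fun p : ℝ × ℝ => φ (x - p.2) * D p)))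
  set bound : ℝ → ℝ := K.indicator (fun _ => C) with hbound
  have main := hasDerivAt_integral_of_dominated_loc_of_deriv_le
    (F := fun s y => φ (x - y) * ρ s y) (F' := fun s y => φ (x - y) * -(D (s, y)))
    (μ := volume) (x₀ := t) (bound := bound) (s := Metric.ball t 1) (Metric.ball_mem_nhds t one_pos)
    (Filter.Eventually.of_forall fun s => (hcont s).aestronglyMeasurable)
    (by
      apply Continuous.integrable_of_hasCompactSupport (hcont t)
      · apply HasCompactSupport.intro hK
        intro y hy
        have : ρ t y = 0 := Function.notMem_support.mp (fun h => hy (hsupp t h))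
        simp [this])
    (Continuous.aestronglyMeasurable
      ((hφc.comp (continuous_const.sub continuous_id)).mul
        ((hDc.comp (Continuous.prodMk_right t)).neg)))
    (Filter.Eventually.of_forall (fun y => by
      intro s hs
      by_cases hy : y ∈ K
      · have : bound y = C := Set.indicator_of_mem hy _
        rw [this]
        have := hC (s, y) ⟨Metric.ball_subset_closedBall hs, hy⟩
        simpa [norm_mul] using this
      · simp [hbound, Set.indicator_of_notMem hy, hD0 s y hy]))
    (by
      rw [hbound, integrable_indicator_iff hK.measurableSet]
      exact integrableOn_const hK.measure_lt_top.ne)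
    (Filter.Eventually.of_forall (fun y => by
      intro s hs
      have := (hρPDE s y).const_mul (φ (x - y))
      simpa [hDeq] using this))
  have hres := main.2
  have hval : (∫ y, φ (x - y) * -(D (t, y))) =
      -∫ y, φ (x - y) * deriv (fun z => u t z * ρ t z) y := by
    simp_rw [hDeq, mul_neg]
    exact integral_neg _
  rwa [hval] at hres

/-- The entropy conservation law for the 1D s-model in weight form: if
`∂ₜρ + ∂ₓ(uρ) = 0`, `∂ₜw + u_F ∂ₓw = 0` with `u_F = (uρ)_φ/ρ_φ`, and
`∂ₜu + u∂ₓu = w((uρ)_φ - u ρ_φ)`, then `e := ∂ₓu + w ρ_φ` satisfies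
`∂ₜe + ∂ₓ(ue) = 0`. -/
theorem stmt_17 (ρ u w : ℝ → ℝ → ℝ) (φ : ℝ → ℝ)
    (hρ : ContDiff ℝ (⊤ : ℕ∞) (fun p : ℝ × ℝ => ρ p.1 p.2))
    (hu : ContDiff ℝ (⊤ : ℕ∞) (fun p : ℝ × ℝ => u p.1 p.2))
    (hw : ContDiff ℝ (⊤ : ℕ∞) (fun p : ℝ × ℝ => w p.1 p.2))
    (hφ : ContDiff ℝ (⊤ : ℕ∞) φ)
    (hsupp : ∃ K : Set ℝ, IsCompact K ∧ ∀ t, Function.support (ρ t) ⊆ K)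
    (hpos : ∀ t x, 0 < ∫ y, φ (x - y) * ρ t y)
    (hρPDE : ∀ t x, HasDerivAt (fun s => ρ s x)
        (-(deriv (fun y => u t y * ρ t y) x)) t)
    (huPDE : ∀ t x, HasDerivAt (fun s => u s x)
        (-(u t x * deriv (u t) x)
          + w t x * ((∫ y, φ (x - y) * (u t y * ρ t y))
              - u t x * ∫ y, φ (x - y) * ρ t y)) t)
    (hwPDE : ∀ t x, HasDerivAt (fun s => w s x)
        (-((∫ y, φ (x - y) * (u t y * ρ t y)) / (∫ y, φ (x - y) * ρ t y)
            * deriv (w t) x)) t) :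
    ∀ t x, HasDerivAt
        (fun s => deriv (u s) x + w s x * ∫ y, φ (x - y) * ρ s y)
        (-(deriv (fun z =>
            u t z * (deriv (u t) z + w t z * ∫ y, φ (z - y) * ρ t y)) x)) t := by
  obtain ⟨K, hK, hsuppK⟩ := hsupp
  intro t x
  -- slice smoothness
  have hut : ContDiff ℝ (⊤ : ℕ∞) (u t) := hu.comp (contDiff_const.prodMk contDiff_id)
  have hρt : ContDiff ℝ (⊤ : ℕ∞) (ρ t) := hρ.comp (contDiff_const.prodMk contDiff_id)
  have hwt : ContDiff ℝ (⊤ : ℕ∞) (w t) := hw.comp (contDiff_const.prodMk contDiff_id)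
  have hsuppg : Function.support (fun y => u t y * ρ t y) ⊆ K := by
    intro z hz
    exact hsuppK t (fun h0 => hz (by simp [h0]))
  -- mixed partial derivative (Clairaut)
  have hmix := mixed_deriv hu t x
  have hueq : (fun z => deriv (fun s => u s z) t)
      = (fun z => -(u t z * deriv (u t) z)
          + w t z * ((∫ y, φ (z - y) * (u t y * ρ t y))
              - u t z * ∫ y, φ (z - y) * ρ t y)) :=
    funext fun z => (huPDE t z).deriv
  rw [hueq] at hmix
  -- spatial derivatives at x
  have hux : HasDerivAt (u t) (deriv (u t) x) x :=
    (hut.differentiable (by simp) x).hasDerivAt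
  have hwx : HasDerivAt (w t) (deriv (w t) x) x :=
    (hwt.differentiable (by simp) x).hasDerivAt
  have hG : ContDiff ℝ (⊤ : ℕ∞) (fun z => fderiv ℝ (fun p : ℝ × ℝ => u p.1 p.2) (t, z) (0, 1)) :=
    (fderiv_apply_smooth hu _).comp (contDiff_const.prodMk contDiff_id)
  have hder_eq : (fun z => deriv (u t) z)
      = fun z => fderiv ℝ (fun p : ℝ × ℝ => u p.1 p.2) (t, z) (0, 1) :=
    funext fun z => by exact (slice_x hu t z).deriv
  have hdiff2 : DifferentiableAt ℝ (fun z => deriv (u t) z) x := by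
    rw [hder_eq]; exact hG.differentiable (by simp) x
  have huxx : HasDerivAt (fun z => deriv (u t) z) (deriv (fun z => deriv (u t) z) x) x :=
    hdiff2.hasDerivAt
  have hIρx := conv_hasDerivAt φ (ρ t) hφ hρt hK (hsuppK t) x
  have hIqx := conv_hasDerivAt φ (fun y => u t y * ρ t y) hφ (hut.mul hρt) hK hsuppg x
  -- explicit derivative of the RHS of the u-equation
  have hRHS : HasDerivAt (fun z => -(u t z * deriv (u t) z)
            + w t z * ((∫ y, φ (z - y) * (u t y * ρ t y))
                - u t z * ∫ y, φ (z - y) * ρ t y)) _ x :=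
    ((hux.mul huxx).neg).add (hwx.mul (hIqx.sub (hux.mul hIρx)))
  rw [hRHS.deriv] at hmix
  -- time derivatives
  have hIρt := param_t ρ u φ hρ hu hφ hK hsuppK hρPDE t x
  have hwtd := hwPDE t x
  have hBt := hwtd.mul hIρt
  have htotal := hmix.add hBt
  -- the target derivative
  have htarget : HasDerivAt (fun z =>
      u t z * (deriv (u t) z + w t z * ∫ y, φ (z - y) * ρ t y)) _ x :=
    hux.mul (huxx.add (hwx.mul hIρx))
  rw [htarget.deriv]
  refine htotal.congr_deriv ?_
  have hIρ0 : (∫ y, φ (x - y) * ρ t y) ≠ 0 := (hpos t x).ne'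
  field_simp
  ring
end
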